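/- For 0 ≤ v1 < 1 and 0 ≤ v2 < 1, the Life composed velocity v1 + v2 - v1*v2 is strictly less than the special-relativistic composed velocity (v1+v2)/(1+v1*v2), unless v1 = 0 or v2 = 0, in which case they are equal. -/

import Mathlib

theorem relativistic_sub_life {K : Type*} [Field K] (a b : K) (h : 1 + a * b ≠ 0) :
    (a + b) / (1 + a * b) - (a + b - a * b) = a * b * (1 - a) * (1 - b) / (1 + a * b) := by
  field_simp
  ring

theorem life_lt_relativistic
    (v1 v2 : ℝ) (h1 : 0 ≤ v1) (h1' : v1 < 1) (h2 : 0 ≤ v2) (h2' : v2 < 1) :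
    (v1 ≠ 0 → v2 ≠ 0 → v1 + v2 - v1 * v2 < (v1 + v2) / (1 + v1 * v2)) ∧
    ((v1 = 0 ∨ v2 = 0) → v1 + v2 - v1 * v2 = (v1 + v2) / (1 + v1 * v2)) := by
  have hden : 0 < 1 + v1 * v2 := by positivity
  constructor
  · intro hv1 hv2
    rw [← sub_pos, relativistic_sub_life v1 v2 hden.ne']
    have hgap : 0 < v1 * v2 * (1 - v1) * (1 - v2) :=
      mul_pos (mul_pos (mul_pos (h1.lt_of_ne' hv1) (h2.lt_of_ne' hv2)) (sub_pos.mpr h1'))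
        (sub_pos.mpr h2')
    exact div_pos hgap hden
  · rintro (rfl | rfl) <;> simp
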